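/- arXiv:1710.01042 — 2 statements merged into one kernel-verified Lean document; each statement's English description precedes it below -/
import Mathlib

section
/- Let (E,ρ) be a metric space and P a Markov operator satisfying the asymptotic log-Harnack inequality P(log f)(x) ≤ log(Pf)(y) + Φ(x,y) + Ψ(x,y)‖∇ log f‖_∞ for all bounded positive f with ‖∇ log f‖_∞ < ∞. Fix a measurable set A, ε > 0, and let A_ε = {z : ρ(z,A) < ε}. Then for every n ≥ 1 and all x,y ∈ E: P1_A(x) ≤ (1/n)·log(1 + e^n·P1_{A_ε}(y)) + (1/n)·Φ(x,y) + ε^{-1}·Ψ(x,y). -/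
open Filter MeasureTheory Real Set ProbabilityTheory

/-!
The Lipschitz function `g = max (1 - ρ(·, A) / ε) 0` equals `1` on `A`, vanishes off the
`ε`-thickening of `A`, and has `‖∇g‖_∞ ≤ ε⁻¹`. Feeding `f = exp (n g)` into the log-Harnack
inequality, the left side `∫ n g ∂P(x, ·)` is at least `n P1_A(x)`, while `f ≤ 1 + eⁿ 1_{A_ε}`
bounds `∫ f ∂P(y, ·)` by `1 + eⁿ P1_{A_ε}(y)` and `‖∇ log f‖_∞ ≤ n / ε`; dividing by `n`
gives the estimate.
-/

/-- `|∇f|(x) := limsup_{y→x} |f(x)−f(y)|/ρ(x,y)`. -/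
noncomputable def gradAt {E : Type*} [MetricSpace E] (f : E → ℝ) (x : E) : ℝ :=
  Filter.limsup (fun y => |f x - f y| / dist x y) (nhdsWithin x {x}ᶜ)

/-- `‖∇f‖_∞ := sup_x |∇f|(x)`. -/
noncomputable def gradNorm {E : Type*} [MetricSpace E] (f : E → ℝ) : ℝ :=
  ⨆ x, gradAt f x

open scoped NNReal

section Gradient

variable {E : Type*} [MetricSpace E] {K : ℝ≥0} {h : E → ℝ}

theorem gradAt_le_of_lipschitzWith (hh : LipschitzWith K h) (x : E) : gradAt h x ≤ K := by
  rcases (nhdsWithin x {x}ᶜ).eq_or_neBot with hbot | hne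
  · -- an isolated point: the limsup along `⊥` is `sInf univ = 0`
    simp [gradAt, hbot, limsup, limsSup]
  · refine limsup_le_of_le (isBoundedUnder_of ⟨0, fun y => by positivity⟩).isCoboundedUnder_le ?_
    filter_upwards [self_mem_nhdsWithin] with y (hy : y ≠ x)
    rw [div_le_iff₀ (dist_pos.2 hy.symm)]
    exact hh.dist_le_mul x y

theorem bddAbove_range_gradAt_of_lipschitzWith (hh : LipschitzWith K h) :
    BddAbove (range (gradAt h)) :=
  ⟨K, forall_mem_range.2 (gradAt_le_of_lipschitzWith hh)⟩

theorem gradNorm_le_of_lipschitzWith [Nonempty E] (hh : LipschitzWith K h) : gradNorm h ≤ K :=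
  ciSup_le (gradAt_le_of_lipschitzWith hh)

end Gradient

section Integrals

variable {α : Type*} [MeasurableSpace α] {μ : Measure α} {g : α → ℝ} {A B : Set α}

theorem measureReal_le_integral_of_one_le_on [IsFiniteMeasure μ] (hA : MeasurableSet A)
    (hg : Integrable g μ) (hg0 : 0 ≤ g) (hgA : ∀ z ∈ A, 1 ≤ g z) : μ.real A ≤ ∫ z, g z ∂μ := by
  rw [← integral_indicator_one hA]
  refine integral_mono ((integrable_const 1).indicator hA) hg fun z => ?_
  by_cases hz : z ∈ A
  · simpa [hz] using hgA z hz
  · simpa [hz] using hg0 z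

theorem integrable_exp_mul_of_le_one [IsFiniteMeasure μ] (hg : Measurable g) (hg1 : g ≤ 1)
    {t : ℝ} (ht : 0 ≤ t) : Integrable (fun z => exp (t * g z)) μ :=
  .of_bound (by fun_prop) (exp t) <| .of_forall fun z => by
    rw [norm_of_nonneg (exp_pos _).le]
    exact exp_le_exp.2 (mul_le_of_le_one_right ht (hg1 z))

theorem integral_exp_mul_le [IsProbabilityMeasure μ] (hB : MeasurableSet B) (hg : Measurable g)
    (hg1 : g ≤ 1) (hgB : EqOn g 0 Bᶜ) {t : ℝ} (ht : 0 ≤ t) :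
    ∫ z, exp (t * g z) ∂μ ≤ 1 + exp t * μ.real B := by
  have hB_int : Integrable (fun z => 1 + exp t * B.indicator 1 z) μ :=
    (integrable_const 1).add (((integrable_const 1).indicator hB).const_mul _)
  calc ∫ z, exp (t * g z) ∂μ ≤ ∫ z, 1 + exp t * B.indicator 1 z ∂μ := by
        refine integral_mono (integrable_exp_mul_of_le_one hg hg1 ht) hB_int fun z => ?_
        by_cases hz : z ∈ B
        · have : exp (t * g z) ≤ exp t := exp_le_exp.2 (mul_le_of_le_one_right ht (hg1 z))
          simp only [indicator_of_mem hz, Pi.one_apply, mul_one]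
          linarith
        · simp [hgB hz, hz]
    _ = 1 + exp t * μ.real B := by
        rw [integral_add (integrable_const 1) (((integrable_const 1).indicator hB).const_mul _),
          integral_const_mul, integral_indicator_one hB]
        simp

end Integrals

section LogHarnack

variable {E : Type*} [MetricSpace E] [MeasurableSpace E] [OpensMeasurableSpace E]

def AsymptoticLogHarnack (κ : Kernel E E) (Φ Ψ : E → E → ℝ) : Prop :=
  ∀ f : E → ℝ, Measurable f → (∀ z, 0 < f z) → (∃ C, ∀ z, f z ≤ C) →
    BddAbove (Set.range (gradAt (fun z => Real.log (f z)))) →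
    ∀ x y : E, ∫ z, Real.log (f z) ∂(κ x) ≤
      Real.log (∫ z, f z ∂(κ y)) + Φ x y + Ψ x y * gradNorm (fun z => Real.log (f z))

/-- The log-Harnack inequality applied to `exp (t * g)` for a Lipschitz `g` squeezed between
`1_A` and `1_B`. -/
theorem AsymptoticLogHarnack.mul_measureReal_le {κ : Kernel E E} [IsMarkovKernel κ]
    {Φ Ψ : E → E → ℝ} (hALH : AsymptoticLogHarnack κ Φ Ψ) (hΨ : ∀ x y, 0 ≤ Ψ x y)
    {A B : Set E} (hA : MeasurableSet A) (hB : MeasurableSet B) {g : E → ℝ} {K : ℝ≥0}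
    (hg : LipschitzWith K g) (hg0 : 0 ≤ g) (hg1 : g ≤ 1) (hgA : EqOn g 1 A) (hgB : EqOn g 0 Bᶜ)
    {t : ℝ} (ht : 0 ≤ t) (x y : E) :
    t * (κ x).real A ≤ log (1 + exp t * (κ y).real B) + Φ x y + Ψ x y * (t * K) := by
  have hg_meas : Measurable g := hg.continuous.measurable
  have hf_int := integrable_exp_mul_of_le_one (μ := κ y) hg_meas hg1 ht
  have hlog : (fun z => log (exp (t * g z))) = fun z => t * g z := funext fun z => log_exp _
  have hlip : LipschitzWith (‖t‖₊ * K) fun z => t * g z := (lipschitzWith_smul t).comp hg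
  have hlip_const : ((‖t‖₊ * K : ℝ≥0) : ℝ) = t * K := by simp [abs_of_nonneg ht]
  have harnack := hALH (fun z => exp (t * g z)) (by fun_prop) (fun z => exp_pos _)
    ⟨exp t, fun z => exp_le_exp.2 (mul_le_of_le_one_right ht (hg1 z))⟩
    (by rw [hlog]; exact bddAbove_range_gradAt_of_lipschitzWith hlip) x y
  rw [hlog] at harnack
  have : Nonempty E := ⟨x⟩
  calc t * (κ x).real A ≤ ∫ z, t * g z ∂(κ x) := by
        rw [integral_const_mul]
        gcongr
        refine measureReal_le_integral_of_one_le_on hA ?_ hg0 fun z hz => (hgA hz).ge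
        exact .of_bound hg_meas.aestronglyMeasurable 1 (.of_forall fun z => by
          rw [norm_of_nonneg (hg0 z)]; exact hg1 z)
    _ ≤ log (∫ z, exp (t * g z) ∂(κ y)) + Φ x y + Ψ x y * gradNorm fun z => t * g z := harnack
    _ ≤ log (1 + exp t * (κ y).real B) + Φ x y + Ψ x y * (t * K) := by
        gcongr
        · exact integral_exp_pos hf_int
        · exact integral_exp_mul_le hB hg_meas hg1 hgB ht
        · exact hΨ x y
        · exact hlip_const ▸ gradNorm_le_of_lipschitzWith hlip

end LogHarnack

theorem Metric.thickening_subset_setOf_infDist_lt {E : Type*} [PseudoMetricSpace E] (ε : ℝ)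
    (A : Set E) : Metric.thickening ε A ⊆ {z | Metric.infDist z A < ε} :=
  fun _ hz => ENNReal.toReal_lt_of_lt_ofReal hz

theorem exists_lipschitzWith_eqOn_one_eqOn_zero_thickening {E : Type*} [PseudoMetricSpace E]
    {ε : ℝ} (hε : 0 < ε) (A : Set E) :
    ∃ g : E → ℝ, LipschitzWith ε.toNNReal⁻¹ g ∧ 0 ≤ g ∧ g ≤ 1 ∧ EqOn g 1 A ∧
      EqOn g 0 (Metric.thickening ε A)ᶜ :=
  ⟨fun z => thickenedIndicator hε A z,
    (NNReal.isometry_coe.lipschitzWith_iff _).2 (lipschitzWith_thickenedIndicator hε A),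
    fun _ => NNReal.coe_nonneg _, fun z => NNReal.coe_le_one.2 (thickenedIndicator_le_one hε A z),
    fun _ hz => by simp [thickenedIndicator_one hε A hz],
    fun _ hz => by simp [thickenedIndicator_zero hε A hz]⟩

theorem asymptotic_irreducibility_inequality_general
    {E : Type*} [MetricSpace E] [MeasurableSpace E] [OpensMeasurableSpace E]
    (κ : Kernel E E) [IsMarkovKernel κ]
    (Φ Ψ : E → E → ℝ)
    (hΨnonneg : ∀ x y, 0 ≤ Ψ x y)
    -- asymptotic log-Harnack inequality
    (hALH : ∀ f : E → ℝ, Measurable f → (∀ z, 0 < f z) → (∃ C, ∀ z, f z ≤ C) →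
      BddAbove (Set.range (gradAt (fun z => Real.log (f z)))) →
      ∀ x y : E, ∫ z, Real.log (f z) ∂(κ x) ≤
        Real.log (∫ z, f z ∂(κ y)) + Φ x y +
          Ψ x y * gradNorm (fun z => Real.log (f z)))
    (A : Set E) (hA : MeasurableSet A) (ε : ℝ) (hε : 0 < ε) :
    ∀ n : ℕ, 1 ≤ n → ∀ x y : E,
      ((κ x) A).toReal ≤
        (1 / (n : ℝ)) * Real.log (1 + Real.exp (n : ℝ) *
            ((κ y) {z | Metric.infDist z A < ε}).toReal)
        + (1 / (n : ℝ)) * Φ x y + ε⁻¹ * Ψ x y := by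
  intro n hn x y
  have hn_pos : (0 : ℝ) < n := by exact_mod_cast hn
  obtain ⟨g, hg, hg0, hg1, hgA, hgB⟩ := exists_lipschitzWith_eqOn_one_eqOn_zero_thickening hε A
  have harnack := AsymptoticLogHarnack.mul_measureReal_le hALH hΨnonneg hA
    Metric.isOpen_thickening.measurableSet hg hg0 hg1 hgA hgB hn_pos.le x y
  have h_log : log (1 + exp n * (κ y).real (Metric.thickening ε A)) ≤
      log (1 + exp n * (κ y).real {z | Metric.infDist z A < ε}) := by
    gcongr log (1 + exp n * ?_)
    exact measureReal_mono (Metric.thickening_subset_setOf_infDist_lt ε A)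
  rw [NNReal.coe_inv, Real.coe_toNNReal _ hε.le] at harnack
  rw [← measureReal_def, ← measureReal_def]
  calc (κ x).real A
      ≤ (log (1 + exp n * (κ y).real {z | Metric.infDist z A < ε}) + Φ x y
          + Ψ x y * (n * ε⁻¹)) / n := by
        rw [le_div_iff₀ hn_pos]
        linarith
    _ = _ := by field_simp

/-- Key estimate for asymptotic irreducibility: from the asymptotic log-Harnack
inequality, `P1_A(x) ≤ (1/n)·log(1 + e^n·P1_{A_ε}(y)) + (1/n)·Φ(x,y) + ε⁻¹·Ψ(x,y)`. -/
theorem asymptotic_irreducibility_inequality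
    {E : Type*} [MetricSpace E] [MeasurableSpace E] [OpensMeasurableSpace E]
    (κ : Kernel E E) [IsMarkovKernel κ]
    (Φ Ψ : E → E → ℝ)
    (hΦnonneg : ∀ x y, 0 ≤ Φ x y) (hΨnonneg : ∀ x y, 0 ≤ Ψ x y)
    -- asymptotic log-Harnack inequality
    (hALH : ∀ f : E → ℝ, Measurable f → (∀ z, 0 < f z) → (∃ C, ∀ z, f z ≤ C) →
      BddAbove (Set.range (gradAt (fun z => Real.log (f z)))) →
      ∀ x y : E, ∫ z, Real.log (f z) ∂(κ x) ≤
        Real.log (∫ z, f z ∂(κ y)) + Φ x y +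
          Ψ x y * gradNorm (fun z => Real.log (f z)))
    (A : Set E) (hA : MeasurableSet A) (ε : ℝ) (hε : 0 < ε) :
    ∀ n : ℕ, 1 ≤ n → ∀ x y : E,
      ((κ x) A).toReal ≤
        (1 / (n : ℝ)) * Real.log (1 + Real.exp (n : ℝ) *
            ((κ y) {z | Metric.infDist z A < ε}).toReal)
        + (1 / (n : ℝ)) * Φ x y + ε⁻¹ * Ψ x y :=
  asymptotic_irreducibility_inequality_general κ Φ Ψ hΨnonneg hALH A hA ε hε
end

section
/- Let P be a Markov operator with kernel P(x,·), and suppose for bounded nonnegative f with Lipschitz log and all x,y: P(log f)(x) ≤ log Pf(y) + Φ(x,y) + Ψ(x,y)‖∇ log f‖_∞. Fix t, x, A, ε, and ε₀ ∈ (0, P(x,A)) with P(x,A) ≥ ε₀. If Ψ(x,y) < ε·ε₀ then P(y, A_ε) > 0. -/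
open Filter MeasureTheory Real Set ProbabilityTheory

lemma gradAt_le_of_lip {E : Type*} [MetricSpace E] {F : E → ℝ} {L : ℝ} (hL : 0 ≤ L)
    (h : ∀ z w, |F z - F w| ≤ L * dist z w) (x : E) : gradAt F x ≤ L := by
  rcases eq_or_neBot (nhdsWithin x {x}ᶜ) with hbot | hne
  · have : gradAt F x = 0 := by
      rw [gradAt, hbot, Filter.limsup, Filter.limsSup, Filter.map_bot]
      have hs : {a : ℝ | ∀ᶠ n in (⊥ : Filter ℝ), n ≤ a} = univ := by ext a; simp
      rw [hs]
      apply Real.sInf_of_not_bddBelow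
      rintro ⟨b, hb⟩
      have := hb (mem_univ (b - 1))
      linarith
    linarith
  · refine Filter.limsup_le_of_le
      (Filter.isCoboundedUnder_le_of_le _ (x := 0)
        (fun z => div_nonneg (abs_nonneg _) dist_nonneg)) ?_
    filter_upwards [self_mem_nhdsWithin] with z hz
    have hd : 0 < dist x z := dist_pos.2 fun e => hz e.symm
    rw [div_le_iff₀ hd]
    exact h x z

lemma log_one_add_exp_le (a b : ℝ) :
    Real.log (1 + Real.exp a) ≤ |a - b| + Real.log (1 + Real.exp b) := by
  have h1 : Real.exp a ≤ Real.exp (|a - b|) * Real.exp b := by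
    rw [← Real.exp_add]
    exact Real.exp_le_exp.2 (by linarith [le_abs_self (a - b)])
  have h2 : (1 : ℝ) ≤ Real.exp (|a - b|) := Real.one_le_exp (abs_nonneg _)
  have hb : 0 < Real.exp b := Real.exp_pos b
  have key : 1 + Real.exp a ≤ Real.exp (|a - b|) * (1 + Real.exp b) := by nlinarith
  calc Real.log (1 + Real.exp a) ≤ Real.log (Real.exp (|a - b|) * (1 + Real.exp b)) :=
        Real.log_le_log (by positivity) key
    _ = |a - b| + Real.log (1 + Real.exp b) := by
        rw [Real.log_mul (by positivity) (by positivity), Real.log_exp]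

/-- Quantitative irreducibility: under the asymptotic log-Harnack inequality, if
`ε₀ ≤ P(x,A)` with `0 < ε₀` and `Ψ(x,y) < ε·ε₀`, then `P(y, A_ε) > 0`. -/
theorem positivity_from_asymptotic_logHarnack
    {E : Type*} [MetricSpace E] [MeasurableSpace E] [OpensMeasurableSpace E]
    (κ : Kernel E E) [IsMarkovKernel κ]
    (Φ Ψ : E → E → ℝ)
    (hΦnonneg : ∀ x y, 0 ≤ Φ x y) (hΨnonneg : ∀ x y, 0 ≤ Ψ x y)
    -- asymptotic log-Harnack inequality
    (hALH : ∀ f : E → ℝ, Measurable f → (∀ z, 0 < f z) → (∃ C, ∀ z, f z ≤ C) →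
      BddAbove (Set.range (gradAt (fun z => Real.log (f z)))) →
      ∀ x y : E, ∫ z, Real.log (f z) ∂(κ x) ≤
        Real.log (∫ z, f z ∂(κ y)) + Φ x y +
          Ψ x y * gradNorm (fun z => Real.log (f z)))
    (A : Set E) (hA : MeasurableSet A) (ε : ℝ) (hε : 0 < ε)
    (ε₀ : ℝ) (hε₀ : 0 < ε₀)
    (x y : E)
    (hPx : ε₀ ≤ ((κ x) A).toReal)
    (hΨ : Ψ x y < ε * ε₀) :
    0 < ((κ y) {z | Metric.infDist z A < ε}).toReal := by
  by_contra hcon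
  push_neg at hcon
  -- the measure of the enlargement is zero
  have h0 : (κ y) {z | Metric.infDist z A < ε} = 0 := by
    have hne : (κ y) {z | Metric.infDist z A < ε} ≠ ⊤ := measure_ne_top _ _
    have := ENNReal.toReal_nonneg (a := (κ y) {z | Metric.infDist z A < ε})
    have h0' : ((κ y) {z | Metric.infDist z A < ε}).toReal = 0 := le_antisymm hcon this
    exact (ENNReal.toReal_eq_zero_iff _).1 h0' |>.resolve_right hne
  have hae : ∀ᵐ z ∂(κ y), ε ≤ Metric.infDist z A := by
    rw [ae_iff]
    simpa [not_le] using h0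
  -- parameters
  have hΨε : Ψ x y / ε < ε₀ := (div_lt_iff₀ hε).2 (by linarith [hΨ])
  set d : ℝ := ε₀ - Ψ x y / ε with hd_def
  have hd : 0 < d := by simp [hd_def]; linarith
  have hlog2 : 0 < Real.log 2 := Real.log_pos (by norm_num)
  set n : ℝ := (Real.log 2 + Φ x y + 1) / d with hn_def
  have hn : 0 < n := by
    apply div_pos _ hd
    have := hΦnonneg x y
    linarith
  -- test function
  set g : E → ℝ := fun z => max 0 (1 - Metric.infDist z A / ε) with hg_def
  have hg0 : ∀ z, 0 ≤ g z := fun z => le_max_left _ _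
  have hg1 : ∀ z, g z ≤ 1 := by
    intro z
    apply max_le (by norm_num)
    have : 0 ≤ Metric.infDist z A / ε := div_nonneg Metric.infDist_nonneg hε.le
    linarith
  have hglip : ∀ z w, |g z - g w| ≤ dist z w / ε := by
    intro z w
    have h1 : |g z - g w| ≤ |(1 - Metric.infDist z A / ε) - (1 - Metric.infDist w A / ε)| := by
      simpa [hg_def, max_comm] using
        abs_max_sub_max_le_abs (1 - Metric.infDist z A / ε) (1 - Metric.infDist w A / ε) 0
    have h2 : |Metric.infDist z A - Metric.infDist w A| ≤ dist z w := by
      have := (Metric.lipschitz_infDist_pt A).dist_le_mul z w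
      simpa [Real.dist_eq] using this
    calc |g z - g w| ≤ |(1 - Metric.infDist z A / ε) - (1 - Metric.infDist w A / ε)| := h1
      _ = |Metric.infDist w A - Metric.infDist z A| / ε := by
          rw [show (1 - Metric.infDist z A / ε) - (1 - Metric.infDist w A / ε)
            = (Metric.infDist w A - Metric.infDist z A) / ε by ring, abs_div, abs_of_pos hε]
      _ ≤ dist z w / ε := by
          gcongr
          rw [abs_sub_comm] at h2; exact h2
  have hgcont : Continuous g :=
    continuous_const.max (continuous_const.sub ((Metric.continuous_infDist_pt A).div_const ε))
  set f : E → ℝ := fun z => 1 + Real.exp (n * g z) with hf_def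
  have hfmeas : Measurable f := by
    apply Measurable.add measurable_const
    exact (Real.measurable_exp.comp ((measurable_const.mul hgcont.measurable)))
  have hfpos : ∀ z, 0 < f z := fun z => by positivity
  have hfle : ∀ z, f z ≤ 1 + Real.exp n := by
    intro z
    have : n * g z ≤ n := by
      have := mul_le_mul_of_nonneg_left (hg1 z) hn.le
      simpa using this
    simpa [hf_def] using Real.exp_le_exp.2 this
  set F : E → ℝ := fun z => Real.log (f z) with hF_def
  have hFlip : ∀ z w, |F z - F w| ≤ (n / ε) * dist z w := by
    intro z w
    have key : ∀ u v : E, F u - F v ≤ (n / ε) * dist u v := by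
      intro u v
      have h1 : F u ≤ |n * g u - n * g v| + F v := log_one_add_exp_le (n * g u) (n * g v)
      have h2 : |n * g u - n * g v| = n * |g u - g v| := by
        rw [← mul_sub, abs_mul, abs_of_pos hn]
      have h3 : n * |g u - g v| ≤ n * (dist u v / ε) :=
        mul_le_mul_of_nonneg_left (hglip u v) hn.le
      have : n * (dist u v / ε) = (n / ε) * dist u v := by ring
      linarith [h1, h3, h2 ▸ h1]
    rw [abs_sub_le_iff]
    exact ⟨key z w, by simpa [dist_comm] using key w z⟩
  have hLnonneg : 0 ≤ n / ε := div_nonneg hn.le hε.le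
  have hgradAt : ∀ z, gradAt F z ≤ n / ε := gradAt_le_of_lip hLnonneg hFlip
  have hbdd : BddAbove (Set.range (gradAt F)) := ⟨n / ε, by rintro _ ⟨z, rfl⟩; exact hgradAt z⟩
  have : Nonempty E := ⟨x⟩
  have hgradNorm : gradNorm F ≤ n / ε := ciSup_le hgradAt
  -- apply the hypothesis
  have hmain := hALH f hfmeas hfpos ⟨1 + Real.exp n, hfle⟩ hbdd x y
  -- RHS: ∫ f dκ y = 2
  have hfy : ∫ z, f z ∂(κ y) = 2 := by
    have hfeq : f =ᵐ[κ y] fun _ => (2 : ℝ) := by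
      filter_upwards [hae] with z hz
      have hgz : g z = 0 := by
        have : 1 - Metric.infDist z A / ε ≤ 0 := by
          have : 1 ≤ Metric.infDist z A / ε := (one_le_div hε).2 hz
          linarith
        simp [hg_def, max_eq_left this]
      simp [hf_def, hgz]; norm_num
    rw [integral_congr_ae hfeq]
    simp
  -- LHS: n * ε₀ ≤ ∫ F dκ x
  have hFnonneg : ∀ z, 0 ≤ F z := by
    intro z
    apply Real.log_nonneg
    have := (Real.exp_pos (n * g z)).le
    simp only [hf_def]; linarith
  have hFbound : ∀ z, |F z| ≤ Real.log (1 + Real.exp n) := by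
    intro z
    rw [abs_of_nonneg (hFnonneg z)]
    exact Real.log_le_log (hfpos z) (hfle z)
  have hFmeas : Measurable F := hfmeas.log
  have hFint : Integrable F (κ x) :=
    (integrable_const (Real.log (1 + Real.exp n))).mono' hFmeas.aestronglyMeasurable
      (ae_of_all _ fun z => by simpa using hFbound z)
  have hngint : Integrable (fun z => n * g z) (κ x) :=
    (integrable_const n).mono' (measurable_const.mul hgcont.measurable).aestronglyMeasurable
      (ae_of_all _ fun z => by
        rw [Real.norm_eq_abs, abs_of_nonneg (mul_nonneg hn.le (hg0 z))]
        have := mul_le_mul_of_nonneg_left (hg1 z) hn.le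
        simpa using this)
  have hind : A.indicator (fun _ => n) ≤ fun z => n * g z := by
    intro z
    by_cases hz : z ∈ A
    · have : g z = 1 := by
        simp [hg_def, Metric.infDist_zero_of_mem hz]
      simp [Set.indicator_of_mem hz, this]
    · simp [Set.indicator_of_notMem hz, mul_nonneg hn.le (hg0 z)]
  have hindint : Integrable (A.indicator fun _ => n) (κ x) :=
    (integrable_const n).indicator hA
  have hstep1 : n * ((κ x) A).toReal ≤ ∫ z, n * g z ∂(κ x) := by
    have := integral_mono hindint hngint hind
    rwa [integral_indicator_const _ hA, smul_eq_mul, mul_comm] at this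
  have hstep2 : ∫ z, n * g z ∂(κ x) ≤ ∫ z, F z ∂(κ x) := by
    apply integral_mono hngint hFint
    intro z
    have : Real.exp (n * g z) ≤ f z := by simp [hf_def]
    calc n * g z = Real.log (Real.exp (n * g z)) := (Real.log_exp _).symm
      _ ≤ F z := Real.log_le_log (Real.exp_pos _) this
  have hLHS : n * ε₀ ≤ ∫ z, F z ∂(κ x) := by
    have := mul_le_mul_of_nonneg_left hPx hn.le
    linarith
  -- conclusion
  have hΨgrad : Ψ x y * gradNorm F ≤ Ψ x y * (n / ε) :=
    mul_le_mul_of_nonneg_left hgradNorm (hΨnonneg x y)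
  have hfinal : n * ε₀ ≤ Real.log 2 + Φ x y + Ψ x y * (n / ε) := by
    calc n * ε₀ ≤ ∫ z, F z ∂(κ x) := hLHS
      _ ≤ Real.log (∫ z, f z ∂(κ y)) + Φ x y + Ψ x y * gradNorm F := hmain
      _ = Real.log 2 + Φ x y + Ψ x y * gradNorm F := by rw [hfy]
      _ ≤ Real.log 2 + Φ x y + Ψ x y * (n / ε) := by linarith
  have hnd : n * d = Real.log 2 + Φ x y + 1 := by
    rw [hn_def, div_mul_cancel₀ _ hd.ne']
  have : Ψ x y * (n / ε) = n * (Ψ x y / ε) := by ring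
  rw [this] at hfinal
  have : n * ε₀ - n * (Ψ x y / ε) = n * d := by rw [hd_def]; ring
  linarith [hnd, hfinal, this ▸ hnd]
end
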